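/- Suppose for finite index sets T_H (coarse mesh) and T_h (fine mesh) and nonnegative functions η_H on T_H, η_h on T_h there hold: stability η_h(T_h ∩ T_H) ≤ η_H(T_h ∩ T_H) + S and reduction η_h(T_h \ T_H)² ≤ q η_H(T_H \ T_h)² + R, where 0 < q < 1 and S, R ≥ 0 and η(U) := (Σ_{t∈U} η(t)²)^{1/2}. Then η_h(T_h)² ≤ 2 η_H(T_H)² + R + 2S². -/

import Mathlib

/-! The stable part of `η_h` is controlled by `(η_H + S)² ≤ 2 η_H² + 2 S²`, the reduced part by
`q η_H² + R ≤ η_H² + R`; adding the two bounds over the disjoint pieces `T_h ∩ T_H` and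
`T_H \ T_h` of `T_H` gives the claim. -/

theorem Real.le_two_mul_add_two_mul_sq_of_sqrt_le_sqrt_add {x y s : ℝ} (hy : 0 ≤ y)
    (h : √x ≤ √y + s) : x ≤ 2 * y + 2 * s ^ 2 :=
  calc x ≤ (√y + s) ^ 2 := (Real.sqrt_le_iff.mp h).2
    _ ≤ 2 * ((√y) ^ 2 + s ^ 2) := add_sq_le
    _ = 2 * y + 2 * s ^ 2 := by rw [Real.sq_sqrt hy]; ring

theorem stmt_6_general {ι : Type*} [DecidableEq ι] (TH Th : Finset ι)
    (ηH ηh : ι → ℝ) (q S R : ℝ)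
    (hq1 : q < 1)
    (hstab : Real.sqrt (∑ t ∈ Th ∩ TH, ηh t ^ 2)
      ≤ Real.sqrt (∑ t ∈ Th ∩ TH, ηH t ^ 2) + S)
    (hred : ∑ t ∈ Th \ TH, ηh t ^ 2 ≤ q * ∑ t ∈ TH \ Th, ηH t ^ 2 + R) :
    ∑ t ∈ Th, ηh t ^ 2 ≤ 2 * ∑ t ∈ TH, ηH t ^ 2 + R + 2 * S ^ 2 := by
  set a := ∑ t ∈ Th ∩ TH, ηH t ^ 2
  set b := ∑ t ∈ TH \ Th, ηH t ^ 2
  have ha : 0 ≤ a := Finset.sum_nonneg fun t _ ↦ sq_nonneg (ηH t)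
  have hb : 0 ≤ b := Finset.sum_nonneg fun t _ ↦ sq_nonneg (ηH t)
  have hTH : ∑ t ∈ TH, ηH t ^ 2 = a + b := by
    rw [← Finset.sum_inter_add_sum_sdiff TH Th, Finset.inter_comm]
  calc ∑ t ∈ Th, ηh t ^ 2 = ∑ t ∈ Th ∩ TH, ηh t ^ 2 + ∑ t ∈ Th \ TH, ηh t ^ 2 :=
        (Finset.sum_inter_add_sum_sdiff Th TH _).symm
    _ ≤ (2 * a + 2 * S ^ 2) + (q * b + R) :=
        add_le_add (Real.le_two_mul_add_two_mul_sq_of_sqrt_le_sqrt_add ha hstab) hred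
    _ ≤ 2 * (a + b) + R + 2 * S ^ 2 := by linarith [mul_le_of_le_one_left hb hq1.le]
    _ = 2 * ∑ t ∈ TH, ηH t ^ 2 + R + 2 * S ^ 2 := by rw [hTH]

theorem stmt_6 {ι : Type*} [DecidableEq ι] (TH Th : Finset ι)
    (ηH ηh : ι → ℝ) (q S R : ℝ)
    (hηH : ∀ t ∈ TH, 0 ≤ ηH t) (hηh : ∀ t ∈ Th, 0 ≤ ηh t)
    (hq0 : 0 < q) (hq1 : q < 1) (hS : 0 ≤ S) (hR : 0 ≤ R)
    (hstab : Real.sqrt (∑ t ∈ Th ∩ TH, ηh t ^ 2)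
      ≤ Real.sqrt (∑ t ∈ Th ∩ TH, ηH t ^ 2) + S)
    (hred : ∑ t ∈ Th \ TH, ηh t ^ 2 ≤ q * ∑ t ∈ TH \ Th, ηH t ^ 2 + R) :
    ∑ t ∈ Th, ηh t ^ 2 ≤ 2 * ∑ t ∈ TH, ηH t ^ 2 + R + 2 * S ^ 2 :=
  stmt_6_general TH Th ηH ηh q S R hq1 hstab hred
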